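/- A norm ‖·‖ on M_n(ℂ) is an L-norm if and only if its dual norm ‖·‖_* is an M-norm. -/

import Mathlib

open Matrix BigOperators ComplexOrder

/-- Square complex matrices. -/
abbrev Mat (n : ℕ) := Matrix (Fin n) (Fin n) ℂ

/-- `N` is a norm on `Mat n`. -/
def IsMatrixNorm {n : ℕ} (N : Mat n → ℝ) : Prop :=
  (∀ A, N A = 0 ↔ A = 0) ∧
  (∀ (c : ℂ) (A : Mat n), N (c • A) = ‖c‖ * N A) ∧
  (∀ A B : Mat n, N (A + B) ≤ N A + N B)

/-- A set of matrices is C*-convex. -/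
def CStarConvex {n : ℕ} (K : Set (Mat n)) : Prop :=
  ∀ (k : ℕ) (C A : Fin k → Mat n), (∀ i, A i ∈ K) →
    (∑ i, (C i)ᴴ * C i = 1) → (∑ i, (C i)ᴴ * A i * C i) ∈ K

/-- `N` is an M-norm. -/
def IsMNorm {n : ℕ} (N : Mat n → ℝ) : Prop :=
  ∀ (k : ℕ) (C X : Fin k → Mat n), (∑ i, (C i)ᴴ * C i = 1) →
    N (∑ i, (C i)ᴴ * X i * C i) ≤ ⨆ i, N (X i)

/-- `N` is an L-norm. -/
def IsLNorm {n : ℕ} (N : Mat n → ℝ) : Prop :=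
  ∀ (k : ℕ) (C : Fin k → Mat n) (X : Mat n), (∑ i, (C i)ᴴ * C i = 1) →
    ∑ i, N (C i * X * (C i)ᴴ) ≤ N X

/-- The dual norm with respect to the pairing `⟨Y|X⟩ = Tr(Yᴴ X)`. -/
noncomputable def dualNorm {n : ℕ} (N : Mat n → ℝ) (Y : Mat n) : ℝ :=
  sSup {r | ∃ X : Mat n, N X ≤ 1 ∧ r = ‖(Yᴴ * X).trace‖}

/-- The operator (spectral) norm of a matrix. -/
noncomputable def opNorm {n : ℕ} (A : Mat n) : ℝ :=
  ‖Matrix.toEuclideanCLM (𝕜 := ℂ) (n := Fin n) A‖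

/-- The positive semidefinite square root, as `Matrix.PosSemidef.sqrt` was defined in the older Mathlib. -/
noncomputable def posSemidefSqrt {m : Type*} [Fintype m] [DecidableEq m] {𝕜 : Type*} [RCLike 𝕜]
    {A : Matrix m m 𝕜} (hA : A.PosSemidef) : Matrix m m 𝕜 :=
  hA.1.eigenvectorUnitary.1 * diagonal ((↑) ∘ (√·) ∘ hA.1.eigenvalues) *
  (star hA.1.eigenvectorUnitary : Matrix m m 𝕜)

/-- The trace norm `‖A‖₁ = Tr((AᴴA)^{1/2})`. -/
noncomputable def traceNorm {n : ℕ} (A : Mat n) : ℝ :=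
  (posSemidefSqrt (Matrix.posSemidef_conjTranspose_mul_self A)).trace.re

/-- The numerical radius. -/
noncomputable def numRadius {n : ℕ} (A : Mat n) : ℝ :=
  sSup {r | ∃ x : EuclideanSpace ℂ (Fin n), ‖x‖ = 1 ∧
    r = ‖inner ℂ x (Matrix.toEuclideanCLM (𝕜 := ℂ) (n := Fin n) A x)‖}

/-!
For the trace pairing, `Z ↦ ∑ Cᵢ Z Cᵢᴴ` is adjoint to `(Yᵢ) ↦ ∑ Cᵢᴴ Yᵢ Cᵢ`. If `N` is an
L-norm, pairing `∑ Cᵢᴴ Yᵢ Cᵢ` with `Z` gives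
`∑ ⟨Yᵢ, Cᵢ Z Cᵢᴴ⟩ ≤ (maxᵢ ‖Yᵢ‖_*) ∑ N(Cᵢ Z Cᵢᴴ) ≤ (maxᵢ ‖Yᵢ‖_*) N Z`.
Conversely, if `‖·‖_*` is an M-norm, pick by Hahn–Banach norming functionals `Yᵢ` of
`Cᵢ X Cᵢᴴ`, with `‖Yᵢ‖_* ≤ 1`; then
`∑ N(Cᵢ X Cᵢᴴ) = ⟨∑ Cᵢᴴ Yᵢ Cᵢ, X⟩ ≤ ‖∑ Cᵢᴴ Yᵢ Cᵢ‖_* N X ≤ N X`.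
-/

namespace Matrix

variable {ι m l R : Type*} [Fintype m] [Fintype l] [CommSemiring R] [StarRing R]

lemma exists_trace_conjTranspose_mul_eq [DecidableEq m] [DecidableEq l]
    (f : Matrix m l R →ₗ[R] R) : ∃ Y : Matrix m l R, ∀ X, (Yᴴ * X).trace = f X := by
  refine ⟨of fun i j => star (f (single i j 1)), fun X => ?_⟩
  conv_rhs => rw [matrix_eq_sum_single X]
  simp only [map_sum, trace, diag, mul_apply, conjTranspose_apply, of_apply, star_star]
  rw [Finset.sum_comm]
  refine Finset.sum_congr rfl fun i _ => Finset.sum_congr rfl fun j _ => ?_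
  rw [← mul_one (X i j), ← smul_eq_mul (X i j), ← smul_single, map_smul, smul_eq_mul,
    smul_eq_mul, mul_one, mul_comm]

lemma trace_conjTranspose_sum_conj_mul [Fintype ι] (C : ι → Matrix m l R)
    (Y : ι → Matrix m m R) (Z : Matrix l l R) :
    ((∑ i, (C i)ᴴ * Y i * C i)ᴴ * Z).trace =
      ∑ i, ((Y i)ᴴ * (C i * Z * (C i)ᴴ)).trace := by
  rw [conjTranspose_sum, Finset.sum_mul, trace_sum]
  refine Finset.sum_congr rfl fun i _ => ?_
  rw [conjTranspose_mul, conjTranspose_mul, conjTranspose_conjTranspose, Matrix.mul_assoc,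
    trace_mul_comm]
  simp only [Matrix.mul_assoc]

end Matrix

section

variable {n : ℕ} {N : Mat n → ℝ}

noncomputable def IsMatrixNorm.toAddGroupNorm (hN : IsMatrixNorm N) : AddGroupNorm (Mat n) where
  toFun := N
  map_zero' := (hN.1 0).2 rfl
  add_le' := hN.2.2
  neg' := fun A => by simpa using hN.2.1 (-1) A
  eq_zero_of_map_eq_zero' := fun A => (hN.1 A).1

lemma IsMatrixNorm.nonneg (hN : IsMatrixNorm N) (A : Mat n) : 0 ≤ N A :=
  apply_nonneg hN.toAddGroupNorm A

/- In the next two proofs `Mat n` already carries the entrywise topology and uniformity, so those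
induced by `N` have to be declared explicitly to take precedence. -/

lemma IsMatrixNorm.exists_bound (hN : IsMatrixNorm N) (f : Mat n →ₗ[ℂ] ℂ) :
    ∃ M, 0 ≤ M ∧ ∀ X, ‖f X‖ ≤ M * N X := by
  let _ := hN.toAddGroupNorm.toNormedAddCommGroup
  let _ : UniformSpace (Mat n) := PseudoMetricSpace.toUniformSpace
  let _ : TopologicalSpace (Mat n) := UniformSpace.toTopologicalSpace
  let _ : NormedSpace ℂ (Mat n) := ⟨fun c A => (hN.2.1 c A).le⟩
  exact ⟨_, norm_nonneg _, (LinearMap.toContinuousLinearMap f).le_opNorm⟩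

lemma IsMatrixNorm.exists_norming_functional (hN : IsMatrixNorm N) (X : Mat n) :
    ∃ f : Mat n →ₗ[ℂ] ℂ, (∀ Z, ‖f Z‖ ≤ N Z) ∧ f X = N X := by
  let _ := hN.toAddGroupNorm.toNormedAddCommGroup
  let _ : UniformSpace (Mat n) := PseudoMetricSpace.toUniformSpace
  let _ : TopologicalSpace (Mat n) := UniformSpace.toTopologicalSpace
  let _ : NormedSpace ℂ (Mat n) := ⟨fun c A => (hN.2.1 c A).le⟩
  obtain ⟨g, hg, hgX⟩ := exists_dual_vector'' ℂ X
  exact ⟨g, fun Z => (g.le_opNorm Z).trans (mul_le_of_le_one_left (norm_nonneg Z) hg), hgX⟩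

lemma dualNorm_nonneg (N : Mat n → ℝ) (Y : Mat n) : 0 ≤ dualNorm N Y :=
  Real.sSup_nonneg fun _ ⟨_, _, hr⟩ => hr ▸ norm_nonneg _

lemma dualNorm_le {Y : Mat n} {c : ℝ} (hc : 0 ≤ c)
    (h : ∀ X, N X ≤ 1 → ‖(Yᴴ * X).trace‖ ≤ c) : dualNorm N Y ≤ c :=
  Real.sSup_le (fun _ ⟨X, hX, hr⟩ => hr ▸ h X hX) hc

lemma IsMatrixNorm.norm_trace_le_dualNorm_mul (hN : IsMatrixNorm N) (Y X : Mat n) :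
    ‖(Yᴴ * X).trace‖ ≤ dualNorm N Y * N X := by
  obtain ⟨M, hM0, hM⟩ :=
    hN.exists_bound (traceLinearMap (Fin n) ℂ ℂ ∘ₗ LinearMap.mulLeft ℂ Yᴴ)
  have hbdd : BddAbove {r | ∃ X : Mat n, N X ≤ 1 ∧ r = ‖(Yᴴ * X).trace‖} :=
    ⟨M, fun _ ⟨Z, hZ, hr⟩ => hr ▸ (hM Z).trans (mul_le_of_le_one_right hM0 hZ)⟩
  rcases (hN.nonneg X).eq_or_lt with hX | hX
  · simp [(hN.1 X).1 hX.symm, (hN.1 0).2 rfl]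
  have hunit : N ((N X : ℂ)⁻¹ • X) = 1 := by
    rw [hN.2.1, norm_inv, Complex.norm_real, Real.norm_of_nonneg hX.le, inv_mul_cancel₀ hX.ne']
  have hle := le_csSup hbdd ⟨_, hunit.le, rfl⟩
  rw [Matrix.mul_smul, trace_smul, smul_eq_mul, norm_mul, norm_inv, Complex.norm_real,
    Real.norm_of_nonneg hX.le, inv_mul_le_iff₀ hX, mul_comm] at hle
  exact hle

lemma IsMatrixNorm.exists_dualNorm_le_one_trace_eq (hN : IsMatrixNorm N) (X : Mat n) :
    ∃ Y, dualNorm N Y ≤ 1 ∧ (Yᴴ * X).trace = N X := by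
  obtain ⟨f, hf, hfX⟩ := hN.exists_norming_functional X
  obtain ⟨Y, hY⟩ := exists_trace_conjTranspose_mul_eq f
  refine ⟨Y, dualNorm_le zero_le_one fun Z hZ => ?_, (hY X).trans hfX⟩
  rw [hY]
  exact (hf Z).trans hZ

lemma IsLNorm.isMNorm_dualNorm (hN : IsMatrixNorm N) (hL : IsLNorm N) :
    IsMNorm (dualNorm N) := by
  intro k C Y hC
  set S := ⨆ i, dualNorm N (Y i)
  have hS : 0 ≤ S := Real.iSup_nonneg fun i => dualNorm_nonneg N (Y i)
  refine dualNorm_le hS fun Z hZ => ?_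
  rw [trace_conjTranspose_sum_conj_mul]
  calc ‖∑ i, ((Y i)ᴴ * (C i * Z * (C i)ᴴ)).trace‖
      ≤ ∑ i, ‖((Y i)ᴴ * (C i * Z * (C i)ᴴ)).trace‖ := norm_sum_le _ _
    _ ≤ ∑ i, S * N (C i * Z * (C i)ᴴ) := Finset.sum_le_sum fun i _ =>
        (hN.norm_trace_le_dualNorm_mul _ _).trans <| mul_le_mul_of_nonneg_right
          (le_ciSup (f := fun j => dualNorm N (Y j)) (Set.finite_range _).bddAbove i)
          (hN.nonneg _)
    _ = S * ∑ i, N (C i * Z * (C i)ᴴ) := (Finset.mul_sum _ _ _).symm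
    _ ≤ S * N Z := mul_le_mul_of_nonneg_left (hL k C Z hC) hS
    _ ≤ S := mul_le_of_le_one_right hS hZ

lemma IsLNorm.of_isMNorm_dualNorm (hN : IsMatrixNorm N) (hM : IsMNorm (dualNorm N)) :
    IsLNorm N := by
  intro k C X hC
  choose Y hY hYX using fun i => hN.exists_dualNorm_le_one_trace_eq (C i * X * (C i)ᴴ)
  have hsum :
      ‖((∑ i, (C i)ᴴ * Y i * C i)ᴴ * X).trace‖ = ∑ i, N (C i * X * (C i)ᴴ) := by
    rw [trace_conjTranspose_sum_conj_mul]
    simp only [hYX]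
    rw [← Complex.ofReal_sum, Complex.norm_real,
      Real.norm_of_nonneg (Finset.sum_nonneg fun i _ => hN.nonneg _)]
  calc ∑ i, N (C i * X * (C i)ᴴ)
      = ‖((∑ i, (C i)ᴴ * Y i * C i)ᴴ * X).trace‖ := hsum.symm
    _ ≤ dualNorm N (∑ i, (C i)ᴴ * Y i * C i) * N X := hN.norm_trace_le_dualNorm_mul _ _
    _ ≤ N X := mul_le_of_le_one_left (hN.nonneg X)
        ((hM k C Y hC).trans (Real.iSup_le hY zero_le_one))

end

theorem isLNorm_iff_dual_isMNorm {n : ℕ} (N : Mat n → ℝ)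
    (hN : IsMatrixNorm N) :
    IsLNorm N ↔ IsMNorm (dualNorm N) :=
  ⟨IsLNorm.isMNorm_dualNorm hN, IsLNorm.of_isMNorm_dualNorm hN⟩
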